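/- arXiv:2310.10669 — 7 statements merged into one kernel-verified Lean document; each statement's English description precedes it below -/
import Mathlib

section
/- The γ-reweight function is unbiased: for any probability distribution P_T on a finite set Σ, averaging the reweighted distribution P_{T'(E)} over a uniformly random bijection E : Σ → {1,...,|Σ|} recovers P_T; i.e., for every t ∈ Σ, E_E[A_E(E(t)) − A_E(E(t)−1)] = P_T(t). -/
/-- The auxiliary function `A_E(i) = max(2 ∑_{t : E(t) ≤ i} P_T(t) − 1, 0)` of the
γ-reweight, where the bijection `E : S ≃ Fin n` is viewed as 1-indexed via `(E t : ℕ) + 1`. -/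
noncomputable def gammaA {S : Type*} [Fintype S]
    (P : S → ℝ) (E : S ≃ Fin (Fintype.card S)) (i : ℕ) : ℝ :=
  max (2 * (∑ t', if (E t' : ℕ) + 1 ≤ i then P t' else 0) - 1) 0

/-!
Reversing the order, `E ↦ rev ∘ E`, is an involution on the bijections `S ≃ Fin n`. It turns
the mass `u` of the first `E t + 1` labels into `1 - u` for the first `rev (E t)` labels, and
likewise the mass `v` of the first `E t` labels into `1 - v`. Since
`max (2x - 1) 0 - max (1 - 2x) 0 = 2x - 1`, the reweighted masses of `t` under `E` and under
its reversal add up to `2 (u - v) = 2 P t`, so their average over all `E` is `P t`.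
-/

open Finset

theorem two_nsmul_sum_eq_card_nsmul_of_involutive {α M : Type*} [Fintype α] [AddCommMonoid M]
    {r : α → α} (hr : Function.Involutive r) {f : α → M} {c : M}
    (hf : ∀ x, f x + f (r x) = c) :
    2 • ∑ x, f x = Fintype.card α • c := by
  calc 2 • ∑ x, f x = ∑ x, f x + ∑ x, f (r x) := by
        rw [two_nsmul, ← Equiv.sum_comp (hr.toPerm r) f]; rfl
    _ = ∑ x, c := by rw [← sum_add_distrib]; exact sum_congr rfl fun x _ => hf x
    _ = Fintype.card α • c := by rw [sum_const, card_univ]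

section PrefixMass

variable {S : Type*} [Fintype S] (P : S → ℝ)

noncomputable def prefixMass (E : S → ℕ) (i : ℕ) : ℝ :=
  ∑ s, if E s < i then P s else 0

theorem prefixMass_succ_sub {E : S → ℕ} (hE : Function.Injective E) (t : S) :
    prefixMass P E (E t + 1) - prefixMass P E (E t) = P t := by
  rw [prefixMass, prefixMass, ← sum_sub_distrib, sum_eq_single t]
  · simp
  · intro s _ hst
    have : E s ≠ E t := hE.ne hst
    split_ifs <;> first | (exfalso; omega) | simp
  · simp

theorem prefixMass_eq_sum_sub_prefixMass {E F : S → ℕ} {i j : ℕ}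
    (h : ∀ s, F s < j ↔ ¬ E s < i) :
    prefixMass P F j = ∑ s, P s - prefixMass P E i := by
  rw [prefixMass, prefixMass, ← sum_sub_distrib]
  refine sum_congr rfl fun s _ => ?_
  by_cases hs : E s < i <;> simp [hs, h s]

end PrefixMass

section GammaReweight

variable {S : Type*} [Fintype S] (P : S → ℝ)

/-- The γ-reweighted distribution `P_{T'(E)}(t) = A_E(E(t)) − A_E(E(t)−1)`. -/
noncomputable def gammaReweight (E : S ≃ Fin (Fintype.card S)) (t : S) : ℝ :=
  gammaA P E ((E t : ℕ) + 1) - gammaA P E (E t : ℕ)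

theorem gammaA_eq_prefixMass (E : S ≃ Fin (Fintype.card S)) (i : ℕ) :
    gammaA P E i = max (2 * prefixMass P (fun s => E s) i - 1) 0 :=
  rfl

theorem gammaReweight_add_gammaReweight_trans_revPerm (hPsum : ∑ t, P t = 1)
    (E : S ≃ Fin (Fintype.card S)) (t : S) :
    gammaReweight P E t + gammaReweight P (E.trans Fin.revPerm) t = 2 * P t := by
  set u := prefixMass P (fun s => E s) (E t + 1)
  set v := prefixMass P (fun s => E s) (E t)
  have huv : u - v = P t := prefixMass_succ_sub P (Fin.val_injective.comp E.injective) t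
  have hrev_succ : prefixMass P (fun s => E.trans Fin.revPerm s) ((E.trans Fin.revPerm t) + 1)
      = 1 - v := by
    rw [← hPsum]
    refine prefixMass_eq_sum_sub_prefixMass P fun s => ?_
    simp only [Equiv.trans_apply, Fin.revPerm_apply, Nat.lt_succ_iff, Fin.val_fin_le,
      Fin.rev_le_rev, not_lt, Fin.val_fin_lt]
  have hrev : prefixMass P (fun s => E.trans Fin.revPerm s) (E.trans Fin.revPerm t)
      = 1 - u := by
    rw [← hPsum]
    refine prefixMass_eq_sum_sub_prefixMass P fun s => ?_
    simp only [Equiv.trans_apply, Fin.revPerm_apply, Nat.lt_succ_iff, Fin.val_fin_lt,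
      Fin.rev_lt_rev, not_le, Fin.val_fin_le]
  simp only [gammaReweight, gammaA_eq_prefixMass, hrev_succ, hrev]
  rw [show 2 * (1 - v) - 1 = -(2 * v - 1) by ring, show 2 * (1 - u) - 1 = -(2 * u - 1) by ring]
  have hu := posPart_sub_negPart (2 * u - 1)
  have hv := posPart_sub_negPart (2 * v - 1)
  simp only [posPart, negPart] at hu hv
  linear_combination hu - hv + 2 * huv

end GammaReweight

theorem gamma_reweight_unbiased_general
    {S : Type*} [Fintype S] [DecidableEq S]
    (P : S → ℝ) (hPsum : ∑ t, P t = 1) (t : S) :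
    ((Fintype.card (S ≃ Fin (Fintype.card S)) : ℝ))⁻¹ *
      ∑ E : S ≃ Fin (Fintype.card S), (gammaA P E ((E t : ℕ) + 1) - gammaA P E (E t : ℕ))
      = P t := by
  have hrev : Function.Involutive fun E : S ≃ Fin (Fintype.card S) => E.trans Fin.revPerm :=
    fun E => by ext; simp
  have hsum := two_nsmul_sum_eq_card_nsmul_of_involutive hrev
    (gammaReweight_add_gammaReweight_trans_revPerm P hPsum · t)
  have hcard : (Fintype.card (S ≃ Fin (Fintype.card S)) : ℝ) ≠ 0 :=
    haveI : Nonempty (S ≃ Fin (Fintype.card S)) := ⟨Fintype.equivFin S⟩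
    Nat.cast_ne_zero.mpr Fintype.card_ne_zero
  simp only [nsmul_eq_mul, Nat.cast_ofNat] at hsum
  change _ * ∑ E, gammaReweight P E t = P t
  field_simp
  linarith

/-- The γ-reweight is unbiased: averaging the reweighted distribution
`P_{T'(E)}(t) = A_E(E(t)) − A_E(E(t)−1)` over a uniformly random bijection `E`
recovers the original distribution `P_T`. -/
theorem gamma_reweight_unbiased
    {S : Type*} [Fintype S] [DecidableEq S]
    (P : S → ℝ) (hP : ∀ t, 0 ≤ P t) (hPsum : ∑ t, P t = 1) (t : S) :
    ((Fintype.card (S ≃ Fin (Fintype.card S)) : ℝ))⁻¹ *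
      ∑ E : S ≃ Fin (Fintype.card S), (gammaA P E ((E t : ℕ) + 1) - gammaA P E (E t : ℕ))
      = P t :=
  gamma_reweight_unbiased_general P hPsum t
end

section
/- For any bijection E : Σ → {1,...,n} and its reversal E^r (defined by E^r(t) = n + 1 − E(t)), and any token t, the sum A_E(E(t)) − A_E(E(t)−1) + A_{E^r}(E^r(t)) − A_{E^r}(E^r(t)−1) equals 2 P_T(t). -/
/-!
With `F i` the `P`-mass of the first `i` tokens in the order `E`, we have `A_E i = (2 F i - 1)⁺`,
and the first `i` tokens of the reversed order are the complement of the first `n - i` tokens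
of `E`, so `A_{E^r} (n - i) = (2 F i - 1)⁻`. The sum in question is therefore
`(x₁⁺ - x₀⁺) + (x₀⁻ - x₁⁻) = x₁ - x₀ = 2 (F (k + 1) - F k) = 2 P t` with `xⱼ = 2 F (k + j) - 1`
and `k = E t`.
-/

namespace GammaReweight

variable {S : Type*} [Fintype S] (P : S → ℝ) {n : ℕ}

noncomputable def prefixMass (E : S ≃ Fin n) (i : ℕ) : ℝ :=
  ∑ t', if (E t' : ℕ) + 1 ≤ i then P t' else 0

theorem gammaA_eq_max_prefixMass (E : S ≃ Fin (Fintype.card S)) (i : ℕ) :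
    gammaA P E i = max (2 * prefixMass P E i - 1) 0 :=
  rfl

theorem prefixMass_apply_add_one [DecidableEq S] (E : S ≃ Fin n) (t : S) :
    prefixMass P E ((E t : ℕ) + 1) = prefixMass P E (E t) + P t := by
  have hsplit : ∀ t', (if (E t' : ℕ) + 1 ≤ E t + 1 then P t' else 0) =
      (if (E t' : ℕ) + 1 ≤ E t then P t' else 0) + if t = t' then P t' else 0 := by
    intro t'
    by_cases h : t = t'
    · subst h
      simp
    · have hne : (E t' : ℕ) ≠ E t := fun h' => h (E.injective (Fin.ext h')).symm
      simp only [h, if_false, add_zero]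
      split_ifs <;> first | rfl | omega
  simp only [prefixMass, hsplit, Finset.sum_add_distrib, Finset.sum_ite_eq, Finset.mem_univ,
    if_true]

theorem prefixMass_trans_revPerm (E : S ≃ Fin n) {i : ℕ} (hi : i ≤ n) :
    prefixMass P (E.trans Fin.revPerm) i = ∑ t, P t - prefixMass P E (n - i) := by
  rw [prefixMass, prefixMass, ← Finset.sum_sub_distrib]
  refine Finset.sum_congr rfl fun t' _ => ?_
  have hlt := (E t').isLt
  simp only [Equiv.trans_apply, Fin.revPerm_apply, Fin.val_rev]
  split_ifs <;> first | omega | ring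

theorem gammaA_trans_revPerm (hPsum : ∑ t, P t = 1) (E : S ≃ Fin (Fintype.card S)) {i : ℕ}
    (hi : i ≤ Fintype.card S) :
    gammaA P (E.trans Fin.revPerm) i = max (-(2 * prefixMass P E (Fintype.card S - i) - 1)) 0 := by
  rw [gammaA_eq_max_prefixMass, prefixMass_trans_revPerm P E hi, hPsum]
  congr 1
  ring

end GammaReweight

open GammaReweight in
theorem gamma_reweight_reversal_sum_general
    {S : Type*} [Fintype S]
    (P : S → ℝ) (hPsum : ∑ t, P t = 1)
    (E : S ≃ Fin (Fintype.card S)) (t : S) :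
    (gammaA P E ((E t : ℕ) + 1) - gammaA P E (E t : ℕ)) +
      (gammaA P (E.trans Fin.revPerm) ((((E.trans Fin.revPerm) t : ℕ)) + 1) -
        gammaA P (E.trans Fin.revPerm) ((E.trans Fin.revPerm) t : ℕ))
      = 2 * P t := by
  classical
  set k : ℕ := (E t : ℕ)
  have hk : k < Fintype.card S := (E t).isLt
  have hrev : ((E.trans Fin.revPerm) t : ℕ) = Fintype.card S - (k + 1) :=
    Fin.val_rev (E t)
  rw [hrev, gammaA_trans_revPerm P hPsum E (by omega), gammaA_trans_revPerm P hPsum E (by omega),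
    show Fintype.card S - (Fintype.card S - (k + 1) + 1) = k by omega, Nat.sub_sub_self hk,
    gammaA_eq_max_prefixMass, gammaA_eq_max_prefixMass]
  have hx₀ := max_zero_sub_max_neg_zero_eq_self (2 * prefixMass P E k - 1)
  have hx₁ := max_zero_sub_max_neg_zero_eq_self (2 * prefixMass P E (k + 1) - 1)
  rw [prefixMass_apply_add_one] at hx₁ ⊢
  linarith

/-- For any bijection `E` and its reversal `E^r` (with `E^r(t) = n + 1 − E(t)` in 1-indexed
terms), the γ-reweighted masses of a token `t` under `E` and `E^r` sum to `2 P_T(t)`. -/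
theorem gamma_reweight_reversal_sum
    {S : Type*} [Fintype S]
    (P : S → ℝ) (hP : ∀ t, 0 ≤ P t) (hPsum : ∑ t, P t = 1)
    (E : S ≃ Fin (Fintype.card S)) (t : S) :
    (gammaA P E ((E t : ℕ) + 1) - gammaA P E (E t : ℕ)) +
      (gammaA P (E.trans Fin.revPerm) ((((E.trans Fin.revPerm) t : ℕ)) + 1) -
        gammaA P (E.trans Fin.revPerm) ((E.trans Fin.revPerm) t : ℕ))
      = 2 * P t :=
  gamma_reweight_reversal_sum_general P hPsum E t
end

section
/- The soft-red-list reweighting with γ = 1/2 is biased for every δ > 0: for Σ = {a,b} with P(a) = 0.9, P(b) = 0.1, the expected reweighted probability E_E[R_E(P)(a)] = (1/2)·(e^δ·0.9)/(e^δ·0.9 + 0.1) + (1/2)·0.9/(0.9 + e^δ·0.1) is strictly less than 0.9 for all δ > 0. -/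
/-- Soft-red-list reweighting: add `δ` to the logits of green tokens (those with
`E t = true`) and renormalize via softmax. -/
noncomputable def softRedList {S : Type*} [Fintype S] (δ : ℝ) (E : S → Bool)
    (P : S → ℝ) (t : S) : ℝ :=
  Real.exp (Real.log (P t) + δ * (if E t then 1 else 0)) /
    ∑ t', Real.exp (Real.log (P t') + δ * (if E t' then 1 else 0))

/-- The soft-red-list reweighting with γ = 1/2 is biased for every δ > 0: for
`Σ = {a, b}` (here `Bool`) with `P(a) = 0.9`, `P(b) = 0.1`, the expected reweighted
probability of `a` over the two equally likely green/red assignments is strictly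
less than `P(a) = 0.9`. -/
theorem soft_red_list_biased (δ : ℝ) (hδ : 0 < δ) :
    let P : Bool → ℝ := fun b => if b then 0.9 else 0.1
    (1 / 2 : ℝ) * softRedList δ (fun b => b) P true
        + (1 / 2 : ℝ) * softRedList δ (fun b => !b) P true < P true := by
  intro P
  have hx : 1 < Real.exp δ := by
    calc (1:ℝ) = Real.exp 0 := Real.exp_zero.symm
    _ < Real.exp δ := Real.exp_lt_exp.2 hδ
  set x := Real.exp δ with hxdef
  have h9 : Real.exp (Real.log (9/10)) = 9/10 := Real.exp_log (by norm_num)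
  have h1 : Real.exp (Real.log (1/10)) = 1/10 := Real.exp_log (by norm_num)
  simp only [softRedList, P, Fintype.sum_bool]
  norm_num
  simp only [Real.exp_add, h9, h1, ← hxdef]
  have hd1 : (0:ℝ) < 9/10 * x + 1/10 := by nlinarith
  have hd2 : (0:ℝ) < 9/10 + 1/10 * x := by nlinarith
  rw [← mul_div_assoc, ← mul_div_assoc, div_add_div _ _ (ne_of_gt hd1) (ne_of_gt hd2)]
  rw [div_lt_iff₀ (mul_pos hd1 hd2)]
  nlinarith [sq_nonneg (x - 1)]
end

section
/- If the reweighting function R is unbiased (E_E[R_E(P)] = P for all distributions P) and watermark codes E_1,...,E_n are i.i.d. with distribution P_E, then the expected watermarked sequence probability equals the unwatermarked probability: E_{E_1,...,E_n}[∏_{i=1}^n R_{E_i}(P_M(·|a, x_{1:i-1}))(x_i)] = ∏_{i=1}^n P_M(x_i | a, x_{1:i-1}). -/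
open MeasureTheory

theorem iid_codes_unbiased_sequence_general
    {S : Type*} [Fintype S] {ℰ : Type*} [MeasurableSpace ℰ]
    (PE : Measure ℰ) [IsProbabilityMeasure PE]
    (R : ℰ → (S → ℝ) → (S → ℝ))
    (hunbiased : ∀ (P : S → ℝ), (∀ y, 0 ≤ P y) → ∑ y, P y = 1 →
      ∀ y : S, ∫ e, R e P y ∂PE = P y)
    (PM : List S → S → ℝ)
    (hPM : ∀ ctx, (∀ y, 0 ≤ PM ctx y) ∧ ∑ y, PM ctx y = 1)
    (a : List S) (n : ℕ) (x : Fin n → S) :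
    ∫ e : Fin n → ℰ,
        (∏ i : Fin n,
          R (e i) (PM (a ++ List.ofFn fun j : Fin i.val => x (Fin.castLE i.isLt.le j))) (x i))
        ∂(Measure.pi fun _ : Fin n => PE)
      = ∏ i : Fin n,
          PM (a ++ List.ofFn fun j : Fin i.val => x (Fin.castLE i.isLt.le j)) (x i) := by
  rw [integral_fintype_prod_eq_prod
    (fun i e => R e (PM (a ++ List.ofFn fun j : Fin i.val => x (Fin.castLE i.isLt.le j))) (x i))]
  exact Finset.prod_congr rfl fun i _ => hunbiased _ (hPM _).1 (hPM _).2 _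

/-- If the reweighting function `R` is unbiased and watermark codes `E 1, …, E n` are i.i.d.
(modeled by the product measure `Measure.pi (fun _ => PE)`), then the expected watermarked
sequence probability equals the unwatermarked sequence probability. -/
theorem iid_codes_unbiased_sequence
    {S : Type*} [Fintype S] {ℰ : Type*} [MeasurableSpace ℰ]
    (PE : Measure ℰ) [IsProbabilityMeasure PE]
    (R : ℰ → (S → ℝ) → (S → ℝ))
    (hRmeas : ∀ (P : S → ℝ) (y : S), Measurable fun e => R e P y)
    (hRdist : ∀ (e : ℰ) (P : S → ℝ), (∀ y, 0 ≤ P y) → ∑ y, P y = 1 →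
      (∀ y, 0 ≤ R e P y) ∧ ∑ y, R e P y = 1)
    (hunbiased : ∀ (P : S → ℝ), (∀ y, 0 ≤ P y) → ∑ y, P y = 1 →
      ∀ y : S, ∫ e, R e P y ∂PE = P y)
    (PM : List S → S → ℝ)
    (hPM : ∀ ctx, (∀ y, 0 ≤ PM ctx y) ∧ ∑ y, PM ctx y = 1)
    (a : List S) (n : ℕ) (x : Fin n → S) :
    ∫ e : Fin n → ℰ,
        (∏ i : Fin n,
          R (e i) (PM (a ++ List.ofFn fun j : Fin i.val => x (Fin.castLE i.isLt.le j))) (x i))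
        ∂(Measure.pi fun _ : Fin n => PE)
      = ∏ i : Fin n,
          PM (a ++ List.ofFn fun j : Fin i.val => x (Fin.castLE i.isLt.le j)) (x i) :=
  iid_codes_unbiased_sequence_general PE R hunbiased PM hPM a n x
end

section
/- The inner minimization of the maximin LLR problem has closed form: min over all Q' with ∑_x Q'(x) = 1 and total variation TV(Q',Q) ≤ d of ⟨Q', S⟩ equals ⟨Q, S⟩ + d(min_x S(x) − max_x S(x)). -/
/-- Closed form of the inner minimization of the maximin LLR problem: the minimum of
`⟨Q', Sc⟩` over all (possibly signed) `Q'` with `∑ Q' = 1` and `TV(Q', Q) ≤ d` equals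
`⟨Q, Sc⟩ + d (min Sc − max Sc)`. -/
theorem maximin_inner_minimization
    {S : Type*} [Fintype S] [Nonempty S]
    (Q : S → ℝ) (hQ : ∀ x, 0 ≤ Q x) (hQsum : ∑ x, Q x = 1)
    (Sc : S → ℝ) (d : ℝ) (hd0 : 0 ≤ d) (hd1 : d ≤ 1) :
    IsLeast
      {v : ℝ | ∃ Q' : S → ℝ, (∑ x, Q' x) = 1 ∧ (1 / 2) * (∑ x, |Q' x - Q x|) ≤ d ∧
        v = ∑ x, Q' x * Sc x}
      ((∑ x, Q x * Sc x) +
        d * (Finset.univ.inf' Finset.univ_nonempty Sc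
              - Finset.univ.sup' Finset.univ_nonempty Sc)) := by
  classical
  set m := Finset.univ.inf' Finset.univ_nonempty Sc with hmdef
  set M := Finset.univ.sup' Finset.univ_nonempty Sc with hMdef
  have hmle : ∀ x, m ≤ Sc x := fun x => Finset.inf'_le _ (Finset.mem_univ x)
  have hleM : ∀ x, Sc x ≤ M := fun x => Finset.le_sup' _ (Finset.mem_univ x)
  have hmM : m ≤ M := le_trans (hmle (Classical.arbitrary S)) (hleM (Classical.arbitrary S))
  constructor
  · -- membership: witness
    obtain ⟨a, -, ha⟩ := Finset.exists_mem_eq_inf' (Finset.univ_nonempty (α := S)) Sc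
    obtain ⟨b, -, hb⟩ := Finset.exists_mem_eq_sup' (Finset.univ_nonempty (α := S)) Sc
    refine ⟨fun x => Q x + d * ((if x = a then 1 else 0) - (if x = b then 1 else 0)), ?_, ?_, ?_⟩
    · rw [Finset.sum_add_distrib, hQsum, ← Finset.mul_sum, Finset.sum_sub_distrib]
      simp
    · have : ∀ x, |Q x + d * ((if x = a then (1:ℝ) else 0) - if x = b then 1 else 0) - Q x|
          = d * |(if x = a then (1:ℝ) else 0) - if x = b then 1 else 0| := by
        intro x
        rw [show Q x + d * ((if x = a then (1:ℝ) else 0) - if x = b then 1 else 0) - Q x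
            = d * ((if x = a then (1:ℝ) else 0) - if x = b then 1 else 0) by ring,
          abs_mul, abs_of_nonneg hd0]
      simp only [this]
      rw [← Finset.mul_sum]
      by_cases hab : a = b
      · subst hab
        simp [hd0]
      · have : ∑ x, |(if x = a then (1:ℝ) else 0) - if x = b then 1 else 0| = 2 := by
          have h1 : ∀ x, |(if x = a then (1:ℝ) else 0) - if x = b then 1 else 0|
              = (if x = a then (1:ℝ) else 0) + if x = b then 1 else 0 := by
            intro x
            by_cases hxa : x = a <;> by_cases hxb : x = b <;> simp_all
          simp only [h1]
          rw [Finset.sum_add_distrib, Finset.sum_ite_eq' Finset.univ a (fun _ => (1:ℝ)),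
            Finset.sum_ite_eq' Finset.univ b (fun _ => (1:ℝ))]
          simp
          norm_num
        rw [this]
        linarith
    · have h1 : ∀ x, (Q x + d * ((if x = a then (1:ℝ) else 0) - if x = b then 1 else 0)) * Sc x
          = Q x * Sc x + d * ((if x = a then Sc x else 0) - if x = b then Sc x else 0) := by
        intro x; split_ifs <;> ring
      simp only [h1]
      rw [Finset.sum_add_distrib, ← Finset.mul_sum, Finset.sum_sub_distrib,
        Finset.sum_ite_eq' Finset.univ a Sc, Finset.sum_ite_eq' Finset.univ b Sc]
      simp [hmdef, hMdef, ha, hb]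
  · -- lower bound
    rintro v ⟨Q', h1, h2, rfl⟩
    set c : ℝ := (m + M) / 2 with hc
    have he0 : ∑ x, (Q' x - Q x) = 0 := by
      rw [Finset.sum_sub_distrib, h1, hQsum]; ring
    have hsum : ∑ x, Q' x * Sc x - ∑ x, Q x * Sc x
        = ∑ x, (Q' x - Q x) * (Sc x - c) := by
      have : ∑ x, (Q' x - Q x) * (Sc x - c)
          = (∑ x, Q' x * Sc x - ∑ x, Q x * Sc x) - c * ∑ x, (Q' x - Q x) := by
        rw [Finset.mul_sum, ← Finset.sum_sub_distrib, ← Finset.sum_sub_distrib]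
        apply Finset.sum_congr rfl; intro x _; ring
      rw [this, he0]; ring
    have habs : |∑ x, (Q' x - Q x) * (Sc x - c)| ≤ d * (M - m) := by
      calc |∑ x, (Q' x - Q x) * (Sc x - c)| ≤ ∑ x, |(Q' x - Q x) * (Sc x - c)| :=
            Finset.abs_sum_le_sum_abs _ _
        _ ≤ ∑ x, |Q' x - Q x| * ((M - m) / 2) := by
            apply Finset.sum_le_sum
            intro x _
            rw [abs_mul]
            apply mul_le_mul_of_nonneg_left _ (abs_nonneg _)
            rw [abs_le]
            constructor
            · have := hmle x; simp [hc]; linarith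
            · have := hleM x; simp [hc]; linarith
        _ = (∑ x, |Q' x - Q x|) * ((M - m) / 2) := by rw [← Finset.sum_mul]
        _ ≤ (2 * d) * ((M - m) / 2) := by
            apply mul_le_mul_of_nonneg_right _ (by linarith)
            linarith
        _ = d * (M - m) := by ring
    have := abs_le.mp habs
    linarith [hsum, this.1]
end

section
/- For the Gumbel-trick δ-reweight, the expected per-token score with a watermark equals ln 2 minus exp(−H_2(P)): if a* = argmax_a {log P(a) + E(a)} for i.i.d. standard Gumbel variables (E(a))_{a∈Σ}, then E[ln 2 − exp(−E(a*))] = ln 2 − ∑_{a∈Σ} P(a)^2, where H_2(P) = −log ∑_a P(a)^2 is the Rényi entropy of order 2. -/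
/-!
Substituting `u = exp (-x)` turns the standard Gumbel law into the standard exponential law, so
`U = exp (-E a)` is `Exp(1)`-distributed. Conditionally on `E a = x`, independence makes `a` the
argmax of `log P b + E b` with probability `∏_{b ≠ a} exp (-e^{-x} P b / P a) = exp (-c U)`,
`c = (1 - P a) / P a`. Hence `E[exp (-E a); a* = a] = E[U e^{-c U}] = (1 + c)⁻² = P a ^ 2`.
The Gumbel law has no atoms, so ties are null and summing over `a` gives `∑ a, P a ^ 2`.
-/

open MeasureTheory Set Real ProbabilityTheory
open scoped ENNReal

lemma lintegral_comp_exp_neg (g : ℝ → ℝ≥0∞) :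
    ∫⁻ x, ENNReal.ofReal (exp (-x)) * g (exp (-x)) = ∫⁻ u in Ioi 0, g u := by
  have hrange : (fun x : ℝ => exp (-x)) '' univ = Ioi 0 := by
    rw [image_univ, ← range_exp]
    exact (Function.Surjective.range_comp neg_surjective exp)
  have hderiv (x : ℝ) (_ : x ∈ univ) :
      HasDerivWithinAt (fun x => exp (-x)) (-exp (-x)) univ x := by
    simpa using ((hasDerivAt_neg x).exp).hasDerivWithinAt (s := univ)
  have hinj : InjOn (fun x : ℝ => exp (-x)) univ := fun x _ y _ h =>
    neg_injective (exp_injective h)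
  rw [← hrange, lintegral_image_eq_lintegral_abs_deriv_mul MeasurableSet.univ hderiv hinj,
    Measure.restrict_univ]
  simp_rw [abs_neg, abs_of_pos (exp_pos _)]

lemma lintegral_ofReal_exp_neg_Ioi (c : ℝ) :
    ∫⁻ u in Ioi c, ENNReal.ofReal (exp (-u)) = ENNReal.ofReal (exp (-c)) := by
  have hint : IntegrableOn (fun u => exp (-u)) (Ioi c) := by
    simpa using exp_neg_integrableOn_Ioi c one_pos
  rw [← ofReal_integral_eq_lintegral_ofReal hint
    (Filter.Eventually.of_forall fun _ => (exp_pos _).le), integral_exp_neg_Ioi]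

lemma lintegral_ofReal_mul_exp_neg_mul_Ioi {r : ℝ} (hr : 0 < r) :
    ∫⁻ u in Ioi 0, ENNReal.ofReal (u * exp (-(r * u))) = ENNReal.ofReal (r ^ 2)⁻¹ := by
  have hgamma := integral_rpow_mul_exp_neg_mul_Ioi two_pos hr
  have hint := integrableOn_rpow_mul_exp_neg_mul_rpow (s := 1) (p := 1) (by norm_num) one_pos hr
  simp only [rpow_one, neg_mul] at hint
  have hnonneg : 0 ≤ᵐ[volume.restrict (Ioi 0)] fun u : ℝ => u * exp (-(r * u)) :=
    (ae_restrict_mem measurableSet_Ioi).mono fun u hu => mul_nonneg (le_of_lt hu) (exp_pos _).le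
  norm_num [Gamma_two] at hgamma
  rw [← ofReal_integral_eq_lintegral_ofReal hint hnonneg, hgamma]

noncomputable def gumbelMeasure : Measure ℝ :=
  volume.withDensity fun x => ENNReal.ofReal (exp (-x) * exp (-exp (-x)))

lemma lintegral_gumbelMeasure {g : ℝ → ℝ≥0∞} (hg : Measurable g) :
    ∫⁻ x, g x ∂gumbelMeasure = ∫⁻ u in Ioi 0, ENNReal.ofReal (exp (-u)) * g (-log u) := by
  rw [gumbelMeasure, lintegral_withDensity_eq_lintegral_mul _ (by fun_prop) hg,
    ← lintegral_comp_exp_neg]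
  congr with x
  simp [ENNReal.ofReal_mul (exp_pos _).le, mul_assoc]

lemma gumbelMeasure_Iic (t : ℝ) :
    gumbelMeasure (Iic t) = ENNReal.ofReal (exp (-exp (-t))) := by
  rw [← lintegral_indicator_one measurableSet_Iic,
    lintegral_gumbelMeasure (measurable_one.indicator measurableSet_Iic),
    ← lintegral_ofReal_exp_neg_Ioi, setLIntegral_congr (Ioi_ae_eq_Ici (a := exp (-t))),
    ← inter_eq_left.2 (Ici_subset_Ioi.2 (exp_pos (-t))),
    ← Measure.restrict_restrict measurableSet_Ici, ← lintegral_indicator measurableSet_Ici]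
  refine setLIntegral_congr_fun measurableSet_Ioi fun u hu => ?_
  have hmem : -log u ∈ Iic t ↔ u ∈ Ici (exp (-t)) := by
    rw [mem_Iic, mem_Ici, neg_le, le_log_iff_exp_le hu]
  by_cases h : u ∈ Ici (exp (-t))
  · simp [h, hmem.2 h]
  · simp [h, mt hmem.1 h]

instance : NullSingletonClass gumbelMeasure := by
  unfold gumbelMeasure; infer_instance

instance : IsProbabilityMeasure gumbelMeasure where
  measure_univ := by
    rw [← setLIntegral_one, Measure.restrict_univ, lintegral_gumbelMeasure measurable_const]
    simp [lintegral_ofReal_exp_neg_Ioi]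

lemma lintegral_gumbelMeasure_exp_neg_mul_exp_neg_mul {c : ℝ} (hc : 0 < 1 + c) :
    ∫⁻ x, ENNReal.ofReal (exp (-x) * exp (-(c * exp (-x)))) ∂gumbelMeasure
      = ENNReal.ofReal ((1 + c) ^ 2)⁻¹ := by
  rw [lintegral_gumbelMeasure (by fun_prop), ← lintegral_ofReal_mul_exp_neg_mul_Ioi hc]
  refine setLIntegral_congr_fun measurableSet_Ioi fun u hu => ?_
  rw [← ENNReal.ofReal_mul (exp_pos _).le, neg_neg, exp_log hu]
  congr 1
  rw [show -((1 + c) * u) = -u + -(c * u) by ring, exp_add]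
  ring

lemma hasLaw_gumbelMeasure_of_cdf {Ω : Type*} [MeasurableSpace Ω] {μ : Measure Ω}
    [IsProbabilityMeasure μ] {X : Ω → ℝ} (hX : Measurable X)
    (hcdf : ∀ g, μ {ω | X ω ≤ g} = ENNReal.ofReal (exp (-exp (-g)))) :
    HasLaw X gumbelMeasure μ where
  aemeasurable := hX.aemeasurable
  map_eq := by
    have := Measure.isProbabilityMeasure_map (μ := μ) hX.aemeasurable
    refine Measure.ext_of_Iic _ _ fun t => ?_
    rw [Measure.map_apply hX measurableSet_Iic, gumbelMeasure_Iic]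
    exact hcdf t

namespace ProbabilityTheory

section IndepFun

variable {Ω α β : Type*} [MeasurableSpace Ω] [MeasurableSpace α] [MeasurableSpace β]
  {μ : Measure Ω} [IsFiniteMeasure μ] {X : Ω → α} {Y : Ω → β}

lemma IndepFun.setLIntegral_preimage_prodMk (hXY : IndepFun X Y μ) (hX : Measurable X)
    (hY : Measurable Y) {D : Set (α × β)} (hD : MeasurableSet D) {f : α → ℝ≥0∞}
    (hf : Measurable f) :
    ∫⁻ ω in (fun ω => (X ω, Y ω)) ⁻¹' D, f (X ω) ∂μ
      = ∫⁻ x, f x * μ (Y ⁻¹' (Prod.mk x ⁻¹' D)) ∂(μ.map X) := by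
  have hmap := setLIntegral_map (μ := μ) hD (hf.comp measurable_fst) (hX.prodMk hY)
  rw [Function.comp_def] at hmap
  have hF : Measurable (D.indicator fun p : α × β => f p.1) :=
    (hf.comp measurable_fst).indicator hD
  rw [← hmap, (indepFun_iff_map_prod_eq_prod_map_map hX.aemeasurable hY.aemeasurable).1 hXY,
    ← lintegral_indicator hD, lintegral_prod _ hF.aemeasurable]
  congr with x
  rw [← Measure.map_apply hY (measurable_prodMk_left hD),
    ← lintegral_indicator_const (measurable_prodMk_left hD)]
  rfl

lemma IndepFun.measure_eq_comp_eq_zero [MeasurableEq α] {ν : Measure α} [NullSingletonClass ν]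
    (hXY : IndepFun X Y μ) (hX : HasLaw X ν μ) (hY : AEMeasurable Y μ) {f : β → α}
    (hf : Measurable f) : μ {ω | X ω = f (Y ω)} = 0 := by
  have : IsFiniteMeasure ν := hX.isFiniteMeasure_iff.1 inferInstance
  have hD : MeasurableSet {p : α × β | p.1 = f p.2} :=
    measurableSet_eq_fun measurable_fst (hf.comp measurable_snd)
  change μ ((fun ω => (X ω, Y ω)) ⁻¹' {p | p.1 = f p.2}) = 0
  rw [← Measure.map_apply_of_aemeasurable (hX.aemeasurable.prodMk hY) hD,
    (indepFun_iff_map_prod_eq_prod_map_map hX.aemeasurable hY).1 hXY, hX.map_eq,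
    Measure.prod_apply_symm hD]
  simp [preimage, measure_singleton]

end IndepFun

section iIndepFun

variable {Ω S : Type*} [MeasurableSpace Ω] {μ : Measure Ω} {E : S → Ω → ℝ}

lemma iIndepFun.indepFun_erase [Fintype S] [DecidableEq S] (hindep : iIndepFun E μ)
    (hE : ∀ a, Measurable (E a)) (a : S) :
    IndepFun (E a) (fun ω (b : Finset.univ.erase a) => E b ω) μ :=
  (hindep.indepFun_finset {a} _ (by simp) hE).comp
    (measurable_pi_apply (⟨a, Finset.mem_singleton_self a⟩ : ({a} : Finset S))) measurable_id

lemma iIndepFun.ae_injective_add [Countable S] {ν : Measure ℝ} [NullSingletonClass ν]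
    (hindep : iIndepFun E μ) (hlaw : ∀ a, HasLaw (E a) ν μ) (w : S → ℝ) :
    ∀ᵐ ω ∂μ, Function.Injective fun a => w a + E a ω := by
  have := hindep.isProbabilityMeasure
  have hne (a b : S) (hab : a ≠ b) : ∀ᵐ ω ∂μ, w a + E a ω ≠ w b + E b ω :=
    measure_mono_null (fun ω (h : ¬ _) => show E a ω = E b ω + (w b - w a) by
        linarith [not_not.1 h])
      ((hindep.indepFun hab).measure_eq_comp_eq_zero (hlaw a) (hlaw b).aemeasurable
        (measurable_add_const (w b - w a)))
  filter_upwards [ae_all_iff.2 fun a => ae_all_iff.2 fun b =>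
    Filter.eventually_imp_distrib_left.2 (hne a b)] with ω hω a b hab
  by_contra h
  exact hω a b h hab

lemma iIndepFun.measure_forall_log_add_le (hindep : iIndepFun E μ)
    (hlaw : ∀ a, HasLaw (E a) gumbelMeasure μ) {P : S → ℝ} (hP : ∀ a, 0 < P a)
    (T : Finset S) (y : ℝ) :
    μ {ω | ∀ b ∈ T, log (P b) + E b ω ≤ y}
      = ENNReal.ofReal (exp (-((∑ b ∈ T, P b) * exp (-y)))) := by
  have hset : {ω | ∀ b ∈ T, log (P b) + E b ω ≤ y}
      = ⋂ b ∈ T, E b ⁻¹' Iic (y - log (P b)) := by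
    ext
    simp [le_sub_iff_add_le']
  rw [hset, hindep.meas_biInter fun b _ => ⟨_, measurableSet_Iic, rfl⟩]
  simp_rw [← Measure.map_apply_of_aemeasurable (hlaw _).aemeasurable measurableSet_Iic,
    (hlaw _).map_eq, gumbelMeasure_Iic, neg_sub, exp_sub, exp_log (hP _), div_eq_mul_inv,
    ← exp_neg]
  rw [← ENNReal.ofReal_prod_of_nonneg (fun _ _ => (exp_pos _).le), ← exp_sum,
    Finset.sum_neg_distrib, Finset.sum_mul]

end iIndepFun

end ProbabilityTheory

section argmaxSet

variable {Ω S : Type*}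

def argmaxSet (s : S → Ω → ℝ) (a : S) : Set Ω := {ω | ∀ b, s b ω ≤ s a ω}

lemma sum_indicator_argmaxSet [Fintype S] {s : S → Ω → ℝ} {ω : Ω}
    (hinj : Function.Injective fun a => s a ω) {a₀ : S} (ha₀ : ∀ b, s b ω ≤ s a₀ ω)
    (g : S → Ω → ℝ) : ∑ a, (argmaxSet s a).indicator (g a) ω = g a₀ ω := by
  rw [Finset.sum_eq_single_of_mem a₀ (Finset.mem_univ _),
    indicator_of_mem (show ω ∈ argmaxSet s a₀ from ha₀)]
  intro b _ hb
  refine indicator_of_notMem (fun hmax => hb (hinj ?_)) _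
  exact le_antisymm (ha₀ b) (hmax a₀)

variable [MeasurableSpace Ω] {μ : Measure Ω}

lemma measurableSet_argmaxSet [Countable S] {s : S → Ω → ℝ} (hs : ∀ b, Measurable (s b))
    (a : S) : MeasurableSet (argmaxSet s a) := by
  simp only [argmaxSet, ofPred_forall]
  exact .iInter fun b => measurableSet_le (hs b) (hs a)

variable [Fintype S] {E : S → Ω → ℝ} {P : S → ℝ}

theorem setLIntegral_argmaxSet_exp_neg (hE : ∀ a, Measurable (E a)) (hindep : iIndepFun E μ)
    (hlaw : ∀ a, HasLaw (E a) gumbelMeasure μ) (hP : ∀ a, 0 < P a) (a : S) :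
    ∫⁻ ω in argmaxSet (fun b ω => log (P b) + E b ω) a, ENNReal.ofReal (exp (-E a ω)) ∂μ
      = ENNReal.ofReal ((P a / ∑ b, P b) ^ 2) := by
  classical
  have := hindep.isProbabilityMeasure
  set T := Finset.univ.erase a
  set W : Ω → T → ℝ := fun ω b => E b ω
  set D : Set (ℝ × (T → ℝ)) := {p | ∀ b : T, log (P b) + p.2 b ≤ log (P a) + p.1}
  have hD : MeasurableSet D := by
    simp only [D, ofPred_forall]
    exact .iInter fun b => measurableSet_le (by fun_prop) (by fun_prop)
  have hA : argmaxSet (fun b ω => log (P b) + E b ω) a = (fun ω => (E a ω, W ω)) ⁻¹' D := by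
    ext ω
    simp only [argmaxSet, D, W, T, mem_preimage, mem_ofPred_eq]
    refine ⟨fun h b => h b, fun h b => ?_⟩
    by_cases hb : b = a
    · rw [hb]
    · exact h ⟨b, Finset.mem_erase.2 ⟨hb, Finset.mem_univ b⟩⟩
  set c := (∑ b ∈ T, P b) / P a
  have hslice (x : ℝ) :
      μ (W ⁻¹' (Prod.mk x ⁻¹' D)) = ENNReal.ofReal (exp (-(c * exp (-x)))) := by
    have hpre : W ⁻¹' (Prod.mk x ⁻¹' D)
        = {ω | ∀ b ∈ T, log (P b) + E b ω ≤ log (P a) + x} := by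
      ext ω
      simp only [mem_preimage, D, W, mem_ofPred_eq, Subtype.forall]
    rw [hpre, hindep.measure_forall_log_add_le hlaw hP, neg_add, exp_add, exp_neg (log _),
      exp_log (hP a)]
    simp only [c, div_eq_mul_inv, mul_assoc]
  have hc : 1 + c = (∑ b, P b) / P a := by
    rw [← Finset.add_sum_erase _ _ (Finset.mem_univ a), add_div, div_self (hP a).ne']
  have hc_pos : 0 < 1 + c :=
    hc ▸ div_pos (Finset.sum_pos (fun b _ => hP b) ⟨a, Finset.mem_univ a⟩) (hP a)
  rw [hA, (hindep.indepFun_erase hE a).setLIntegral_preimage_prodMk (Y := W) (hE a)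
    (measurable_pi_lambda _ fun b => hE b) hD (f := fun x => ENNReal.ofReal (exp (-x)))
    (by fun_prop), (hlaw a).map_eq]
  simp_rw [hslice, ← ENNReal.ofReal_mul (exp_pos _).le]
  rw [lintegral_gumbelMeasure_exp_neg_mul_exp_neg_mul hc_pos, hc, ← inv_pow, inv_div]

theorem integrableOn_argmaxSet_exp_neg (hE : ∀ a, Measurable (E a)) (hindep : iIndepFun E μ)
    (hlaw : ∀ a, HasLaw (E a) gumbelMeasure μ) (hP : ∀ a, 0 < P a) (a : S) :
    IntegrableOn (fun ω => exp (-E a ω)) (argmaxSet (fun b ω => log (P b) + E b ω) a) μ := by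
  refine ⟨(hE a).neg.exp.aestronglyMeasurable, ?_⟩
  rw [hasFiniteIntegral_iff_ofReal (ae_of_all _ fun _ => (exp_pos _).le),
    setLIntegral_argmaxSet_exp_neg hE hindep hlaw hP]
  exact ENNReal.ofReal_lt_top

theorem setIntegral_argmaxSet_exp_neg (hE : ∀ a, Measurable (E a)) (hindep : iIndepFun E μ)
    (hlaw : ∀ a, HasLaw (E a) gumbelMeasure μ) (hP : ∀ a, 0 < P a) (a : S) :
    ∫ ω in argmaxSet (fun b ω => log (P b) + E b ω) a, exp (-E a ω) ∂μ
      = (P a / ∑ b, P b) ^ 2 := by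
  rw [integral_eq_lintegral_of_nonneg_ae (f := fun ω => exp (-E a ω))
      (ae_of_all _ fun _ => (exp_pos _).le) (hE a).neg.exp.aestronglyMeasurable,
    setLIntegral_argmaxSet_exp_neg hE hindep hlaw hP, ENNReal.toReal_ofReal (sq_nonneg _)]

end argmaxSet

theorem gumbel_trick_expected_score_general
    {Ω : Type*} [MeasurableSpace Ω] (μ : Measure Ω) [IsProbabilityMeasure μ]
    {S : Type*} [Fintype S]
    (P : S → ℝ) (hP : ∀ a, 0 < P a) (hPsum : ∑ a, P a = 1)
    (E : S → Ω → ℝ) (hEmeas : ∀ a, Measurable (E a))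
    (hindep : ProbabilityTheory.iIndepFun E μ)
    (hgumbel : ∀ a, ∀ g : ℝ,
      μ {ω | E a ω ≤ g} = ENNReal.ofReal (Real.exp (-Real.exp (-g))))
    (astar : Ω → S)
    (hastar : ∀ᵐ ω ∂μ, ∀ a : S,
      Real.log (P a) + E a ω ≤ Real.log (P (astar ω)) + E (astar ω) ω) :
    ∫ ω, (Real.log 2 - Real.exp (-(E (astar ω) ω))) ∂μ
      = Real.log 2 - ∑ a, (P a) ^ 2 := by
  have hlaw a := hasLaw_gumbelMeasure_of_cdf (hEmeas a) (hgumbel a)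
  set A := argmaxSet fun b ω => log (P b) + E b ω
  have hA a : MeasurableSet (A a) := measurableSet_argmaxSet (fun b => (hEmeas b).const_add _) a
  have hterm a : Integrable ((A a).indicator fun ω => exp (-E a ω)) μ :=
    (integrableOn_argmaxSet_exp_neg hEmeas hindep hlaw hP a).integrable_indicator (hA a)
  have hdecomp : (fun ω => exp (-E (astar ω) ω))
      =ᵐ[μ] fun ω => ∑ a, (A a).indicator (fun ω => exp (-E a ω)) ω := by
    filter_upwards [hastar, hindep.ae_injective_add hlaw fun b => log (P b)]
      with ω hmax hinj
    exact (sum_indicator_argmaxSet hinj hmax fun a ω => exp (-E a ω)).symm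
  calc ∫ ω, (log 2 - exp (-E (astar ω) ω)) ∂μ
      = ∫ ω, (log 2 - ∑ a, (A a).indicator (fun ω => exp (-E a ω)) ω) ∂μ :=
        integral_congr_ae (hdecomp.mono fun ω h => congrArg (log 2 - ·) h)
    _ = log 2 - ∑ a, ∫ ω in A a, exp (-E a ω) ∂μ := by
        rw [integral_sub (integrable_const _) (integrable_finsetSum _ fun a _ => hterm a),
          integral_const, probReal_univ, one_smul, integral_finsetSum _ fun a _ => hterm a]
        simp_rw [integral_indicator (hA _)]
    _ = log 2 - ∑ a, P a ^ 2 := by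
        simp_rw [A, setIntegral_argmaxSet_exp_neg hEmeas hindep hlaw hP, hPsum, div_one]

/-- Expected per-token score of the Gumbel-trick δ-reweight: if `astar` is the argmax of
`log P a + E a` for i.i.d. standard Gumbel variables `E a`, then
`E[ln 2 − exp (−E astar)] = ln 2 − ∑ a, P a ^ 2 = ln 2 − exp (−H₂(P))`. -/
theorem gumbel_trick_expected_score
    {Ω : Type*} [MeasurableSpace Ω] (μ : Measure Ω) [IsProbabilityMeasure μ]
    {S : Type*} [Fintype S] [Nonempty S]
    (P : S → ℝ) (hP : ∀ a, 0 < P a) (hPsum : ∑ a, P a = 1)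
    (E : S → Ω → ℝ) (hEmeas : ∀ a, Measurable (E a))
    (hindep : ProbabilityTheory.iIndepFun E μ)
    (hgumbel : ∀ a, ∀ g : ℝ,
      μ {ω | E a ω ≤ g} = ENNReal.ofReal (Real.exp (-Real.exp (-g))))
    (astar : Ω → S)
    (hastar : ∀ᵐ ω ∂μ, ∀ a : S,
      Real.log (P a) + E a ω ≤ Real.log (P (astar ω)) + E (astar ω) ω) :
    ∫ ω, (Real.log 2 - Real.exp (-(E (astar ω) ω))) ∂μ
      = Real.log 2 - ∑ a, (P a) ^ 2 :=
  gumbel_trick_expected_score_general μ P hP hPsum E hEmeas hindep hgumbel astar hastar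
end

section
/- In the Gumbel-max trick, the argmax is distributed according to P: if (E(a))_{a∈Σ} are i.i.d. standard Gumbel and a* = argmax_a {log P(a) + E(a)}, then P(a* = a) = P(a) for every a ∈ Σ. -/
/-!
Put `G b = log P b + E b`: its distribution function is `exp (-P b * exp (-x))`, and such
distribution functions multiply by adding their parameters. Given `G a = t`, the other `G b` all
stay below `t` with probability `exp (-(1 - P a) * exp (-t))`, and integrating this against the
density of `G a` gives `P a / (P a + (1 - P a)) = P a`. So `μ {astar = a} ≤ P a` for every `a`;
as the fibers of `astar` cover `Ω` and the `P a` sum to one, these inequalities are equalities,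
and ties never have to be handled.
-/

open MeasureTheory Filter Set Real Topology ProbabilityTheory

theorem integrable_of_hasDerivAt_of_nonneg {g g' : ℝ → ℝ} {l l' : ℝ}
    (hderiv : ∀ x, HasDerivAt g (g' x) x) (hg' : Continuous g') (hnonneg : ∀ x, 0 ≤ g' x)
    (hbot : Tendsto g atBot (𝓝 l)) (htop : Tendsto g atTop (𝓝 l')) : Integrable g' := by
  refine integrable_of_intervalIntegral_norm_tendsto (l' - l) (fun _ => hg'.integrableOn_Ioc)
    tendsto_neg_atTop_atBot tendsto_id ?_
  have hint : ∀ i : ℝ, ∫ x in -i..id i, ‖g' x‖ = g i - g (-i) := fun i => by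
    simp_rw [Real.norm_of_nonneg (hnonneg _)]
    exact intervalIntegral.integral_eq_sub_of_hasDerivAt (fun x _ => hderiv x)
      (hg'.intervalIntegrable _ _)
  simp_rw [hint]
  exact htop.sub (hbot.comp tendsto_neg_atTop_atBot)

namespace ProbabilityTheory

/-- The distribution function of the Gumbel law with location `log p`; `p = 1` gives the
standard one. -/
noncomputable def gumbelCDF (p x : ℝ) : ℝ := exp (-(p * exp (-x)))

noncomputable def gumbelPDF (p x : ℝ) : ℝ := p * exp (-x) * gumbelCDF p x

noncomputable def gumbelMeasure (p : ℝ) : Measure ℝ :=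
  volume.withDensity fun x => ENNReal.ofReal (gumbelPDF p x)

variable {p q : ℝ}

lemma gumbelCDF_pos (p x : ℝ) : 0 < gumbelCDF p x := exp_pos _

lemma gumbelCDF_add (p q x : ℝ) : gumbelCDF (p + q) x = gumbelCDF p x * gumbelCDF q x := by
  rw [gumbelCDF, gumbelCDF, gumbelCDF, ← exp_add]
  ring_nf

lemma gumbelCDF_sum {ι : Type*} (s : Finset ι) (p : ι → ℝ) (x : ℝ) :
    gumbelCDF (∑ i ∈ s, p i) x = ∏ i ∈ s, gumbelCDF (p i) x := by
  simp only [gumbelCDF, ← exp_sum, Finset.sum_mul, Finset.sum_neg_distrib]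

lemma gumbelCDF_one_sub_log (hp : 0 < p) (x : ℝ) : gumbelCDF 1 (x - log p) = gumbelCDF p x := by
  rw [gumbelCDF, gumbelCDF, one_mul, neg_sub, sub_eq_add_neg, exp_add, exp_log hp]

lemma gumbelPDF_nonneg (hp : 0 ≤ p) (x : ℝ) : 0 ≤ gumbelPDF p x := by
  unfold gumbelPDF gumbelCDF
  positivity

lemma continuous_gumbelPDF (p : ℝ) : Continuous (gumbelPDF p) := by
  unfold gumbelPDF gumbelCDF
  fun_prop

lemma hasDerivAt_gumbelCDF (p x : ℝ) : HasDerivAt (gumbelCDF p) (gumbelPDF p x) x := by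
  have hexponent : HasDerivAt (fun y => -(p * exp (-y))) (p * exp (-x)) x := by
    simpa using ((hasDerivAt_neg x).exp.const_mul p).fun_neg
  have h := hexponent.exp
  rw [mul_comm] at h
  exact h

lemma tendsto_gumbelCDF_atBot (hp : 0 < p) : Tendsto (gumbelCDF p) atBot (𝓝 0) :=
  tendsto_exp_atBot.comp <| tendsto_neg_atTop_atBot.comp <|
    (tendsto_exp_atTop.comp tendsto_neg_atBot_atTop).const_mul_atTop hp

lemma tendsto_gumbelCDF_atTop (p : ℝ) : Tendsto (gumbelCDF p) atTop (𝓝 1) := by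
  show Tendsto (fun x => exp (-(p * exp (-x)))) atTop (𝓝 1)
  simpa using ((tendsto_exp_neg_atTop_nhds_zero.const_mul p).neg).rexp

lemma integrable_gumbelPDF (hp : 0 < p) : Integrable (gumbelPDF p) :=
  integrable_of_hasDerivAt_of_nonneg (hasDerivAt_gumbelCDF p) (continuous_gumbelPDF p)
    (gumbelPDF_nonneg hp.le) (tendsto_gumbelCDF_atBot hp) (tendsto_gumbelCDF_atTop p)

lemma integral_gumbelPDF (hp : 0 < p) : ∫ x, gumbelPDF p x = 1 := by
  simpa using integral_of_hasDerivAt_of_tendsto (hasDerivAt_gumbelCDF p)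
    (integrable_gumbelPDF hp) (tendsto_gumbelCDF_atBot hp) (tendsto_gumbelCDF_atTop p)

lemma gumbelMeasure_Iic (hp : 0 < p) (x : ℝ) :
    gumbelMeasure p (Iic x) = ENNReal.ofReal (gumbelCDF p x) := by
  rw [gumbelMeasure, withDensity_apply _ measurableSet_Iic,
    ← ofReal_integral_eq_lintegral_ofReal (integrable_gumbelPDF hp).integrableOn
      (ae_of_all _ (gumbelPDF_nonneg hp.le))]
  congr 1
  simpa using integral_Iic_of_hasDerivAt_of_tendsto' (fun y _ => hasDerivAt_gumbelCDF p y)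
    (integrable_gumbelPDF hp).integrableOn (tendsto_gumbelCDF_atBot hp)

lemma gumbelPDF_mul_gumbelCDF (hpq : p + q ≠ 0) (x : ℝ) :
    gumbelPDF p x * gumbelCDF q x = p / (p + q) * gumbelPDF (p + q) x := by
  rw [gumbelPDF, gumbelPDF, gumbelCDF_add]
  field_simp

/-- The probability that a Gumbel variable of parameter `p` beats an independent one of
parameter `q` is `p / (p + q)`. -/
lemma lintegral_gumbelCDF_gumbelMeasure (hp : 0 < p) (hq : 0 ≤ q) :
    ∫⁻ x, ENNReal.ofReal (gumbelCDF q x) ∂gumbelMeasure p = ENNReal.ofReal (p / (p + q)) := by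
  have hpq : 0 < p + q := by linarith
  rw [gumbelMeasure, lintegral_withDensity_eq_lintegral_mul _
    (continuous_gumbelPDF p).measurable.ennreal_ofReal
    (by unfold gumbelCDF; fun_prop : Measurable fun x => ENNReal.ofReal (gumbelCDF q x))]
  simp_rw [Pi.mul_apply, ← ENNReal.ofReal_mul (gumbelPDF_nonneg hp.le _),
    gumbelPDF_mul_gumbelCDF hpq.ne', ENNReal.ofReal_mul (div_nonneg hp.le hpq.le)]
  rw [lintegral_const_mul _ (continuous_gumbelPDF _).measurable.ennreal_ofReal,
    ← ofReal_integral_eq_lintegral_ofReal (integrable_gumbelPDF hpq)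
      (ae_of_all _ (gumbelPDF_nonneg hpq.le)), integral_gumbelPDF hpq, ENNReal.ofReal_one,
    mul_one]

variable {Ω : Type*} [MeasurableSpace Ω] {μ : Measure Ω}

lemma map_eq_gumbelMeasure [IsFiniteMeasure μ] {X : Ω → ℝ} (hX : Measurable X) (hp : 0 < p)
    (hcdf : ∀ x, μ {ω | X ω ≤ x} = ENNReal.ofReal (gumbelCDF p x)) :
    μ.map X = gumbelMeasure p :=
  Measure.ext_of_Iic _ _ fun x => by
    rw [Measure.map_apply hX measurableSet_Iic, gumbelMeasure_Iic hp]
    exact hcdf x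

lemma IndepFun.measure_preimage_eq_lintegral [IsFiniteMeasure μ] {α β : Type*}
    [MeasurableSpace α] [MeasurableSpace β] {X : Ω → α} {Y : Ω → β} (hXY : IndepFun X Y μ)
    (hX : Measurable X) (hY : Measurable Y) {B : Set (α × β)} (hB : MeasurableSet B) :
    μ ((fun ω => (X ω, Y ω)) ⁻¹' B) = ∫⁻ x, μ (Y ⁻¹' (Prod.mk x ⁻¹' B)) ∂μ.map X := by
  rw [← Measure.map_apply (hX.prodMk hY) hB,
    hXY.map_prod_eq_prod_map_map hX.aemeasurable hY.aemeasurable, Measure.prod_apply hB]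
  exact lintegral_congr fun x => Measure.map_apply hY (measurable_prodMk_left hB)

variable {ι : Type*} [Fintype ι]

lemma iIndepFun.indepFun_erase_s19 [DecidableEq ι] {β : Type*} [MeasurableSpace β]
    {f : ι → Ω → β} (hf : iIndepFun f μ) (hmeas : ∀ i, Measurable (f i)) (i : ι) :
    IndepFun (f i) (fun ω (j : (Finset.univ.erase i : Finset ι)) => f j ω) μ :=
  (hf.indepFun_finset {i} (Finset.univ.erase i)
    (Finset.disjoint_singleton_left.2 (Finset.notMem_erase i _)) hmeas).comp
    (measurable_pi_apply (⟨i, Finset.mem_singleton_self i⟩ : ({i} : Finset ι))) measurable_id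

lemma iIndepFun.measure_forall_le_eq_gumbelCDF_sum {G : ι → Ω → ℝ} (hG : iIndepFun G μ)
    {p : ι → ℝ} (hcdf : ∀ i x, μ {ω | G i ω ≤ x} = ENNReal.ofReal (gumbelCDF (p i) x)) (x : ℝ) :
    μ {ω | ∀ i, G i ω ≤ x} = ENNReal.ofReal (gumbelCDF (∑ i, p i) x) := by
  have hset : {ω | ∀ i, G i ω ≤ x} = ⋂ i, G i ⁻¹' Iic x := by
    ext ω
    simp
  rw [hset, hG.meas_iInter fun i => ⟨Iic x, measurableSet_Iic, rfl⟩, gumbelCDF_sum,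
    ENNReal.ofReal_prod_of_nonneg fun i _ => (gumbelCDF_pos _ _).le]
  exact Finset.prod_congr rfl fun i _ => hcdf i x

theorem iIndepFun.measure_forall_le_eq_div_sum [DecidableEq ι] {G : ι → Ω → ℝ}
    (hG : iIndepFun G μ) (hmeas : ∀ i, Measurable (G i)) {p : ι → ℝ} (hp : ∀ i, 0 < p i)
    (hcdf : ∀ i x, μ {ω | G i ω ≤ x} = ENNReal.ofReal (gumbelCDF (p i) x)) (i : ι) :
    μ {ω | ∀ j, G j ω ≤ G i ω} = ENNReal.ofReal (p i / ∑ j, p j) := by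
  have := hG.isProbabilityMeasure
  set Y : Ω → (Finset.univ.erase i → ℝ) := fun ω j => G j ω
  set B : Set (ℝ × (Finset.univ.erase i → ℝ)) := {z | ∀ j, z.2 j ≤ z.1}
  have hB : MeasurableSet B := by
    simp only [B, ofPred_forall]
    exact MeasurableSet.iInter fun j => measurableSet_le (by fun_prop) measurable_fst
  have hevent : {ω | ∀ j, G j ω ≤ G i ω} = (fun ω => (G i ω, Y ω)) ⁻¹' B := by
    ext ω
    simp only [B, Y, mem_ofPred_eq, mem_preimage, Subtype.forall, Finset.mem_erase]
    exact ⟨fun h j _ => h j,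
      fun h j => if hj : j = i then hj ▸ le_rfl else h j ⟨hj, Finset.mem_univ j⟩⟩
  have hsection : ∀ t, μ (Y ⁻¹' (Prod.mk t ⁻¹' B))
      = ENNReal.ofReal (gumbelCDF (∑ j ∈ Finset.univ.erase i, p j) t) := fun t => by
    rw [← Finset.sum_coe_sort]
    exact (hG.precomp Subtype.val_injective).measure_forall_le_eq_gumbelCDF_sum
      (fun j => hcdf j) t
  rw [hevent, (hG.indepFun_erase_s19 hmeas i).measure_preimage_eq_lintegral (Y := Y) (hmeas i)
      (measurable_pi_lambda _ fun j => hmeas j) hB,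
    map_eq_gumbelMeasure (hmeas i) (hp i) (hcdf i)]
  simp_rw [hsection]
  rw [lintegral_gumbelCDF_gumbelMeasure (hp i) (Finset.sum_nonneg fun j _ => (hp j).le),
    Finset.add_sum_erase _ _ (Finset.mem_univ i)]

lemma toReal_measure_fiber_eq_of_le [IsProbabilityMeasure μ] {S : Type*} [Fintype S]
    {f : Ω → S} {P : S → ℝ} (hP : ∀ a, 0 ≤ P a) (hPsum : ∑ a, P a = 1)
    (hle : ∀ a, μ {ω | f ω = a} ≤ ENNReal.ofReal (P a)) (a : S) :
    (μ {ω | f ω = a}).toReal = P a := by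
  have hle' : ∀ b, (μ {ω | f ω = b}).toReal ≤ P b := fun b =>
    ENNReal.toReal_le_of_le_ofReal (hP b) (hle b)
  have hcover : μ univ ≤ ∑ b, μ {ω | f ω = b} := by
    have hunion : ⋃ b, {ω | f ω = b} = univ := iUnion_eq_univ_iff.2 fun ω => ⟨f ω, rfl⟩
    simpa only [hunion] using measure_iUnion_fintype_le μ fun b => {ω | f ω = b}
  have hsum : ∑ b, P b ≤ ∑ b, (μ {ω | f ω = b}).toReal := by
    have := ENNReal.toReal_mono (ENNReal.sum_ne_top.2 fun b _ => measure_ne_top μ _) hcover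
    rwa [measure_univ, ENNReal.toReal_one, ENNReal.toReal_sum fun b _ => measure_ne_top μ _,
      ← hPsum] at this
  exact (Finset.sum_eq_sum_iff_of_le fun b _ => hle' b).1
    (le_antisymm (Finset.sum_le_sum fun b _ => hle' b) hsum) a (Finset.mem_univ a)

end ProbabilityTheory

theorem gumbel_max_trick_general
    {Ω : Type*} [MeasurableSpace Ω] (μ : Measure Ω) [IsProbabilityMeasure μ]
    {S : Type*} [Fintype S]
    (P : S → ℝ) (hP : ∀ a, 0 < P a) (hPsum : ∑ a, P a = 1)
    (E : S → Ω → ℝ) (hEmeas : ∀ a, Measurable (E a))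
    (hindep : ProbabilityTheory.iIndepFun E μ)
    (hgumbel : ∀ a, ∀ g : ℝ,
      μ {ω | E a ω ≤ g} = ENNReal.ofReal (Real.exp (-Real.exp (-g))))
    (astar : Ω → S)
    (hastar : ∀ ω, ∀ a : S,
      Real.log (P a) + E a ω ≤ Real.log (P (astar ω)) + E (astar ω) ω) :
    ∀ a : S, (μ {ω | astar ω = a}).toReal = P a := by
  classical
  set G : S → Ω → ℝ := fun b ω => log (P b) + E b ω
  have hGmeas : ∀ b, Measurable (G b) := fun b => (hEmeas b).const_add _
  have hGindep : iIndepFun G μ :=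
    hindep.comp (fun b x => log (P b) + x) fun b => measurable_const_add _
  have hGcdf : ∀ b x, μ {ω | G b ω ≤ x} = ENNReal.ofReal (gumbelCDF (P b) x) := fun b x => by
    have hset : {ω | G b ω ≤ x} = {ω | E b ω ≤ x - log (P b)} := by
      ext ω
      simp only [G, mem_ofPred_eq, le_sub_iff_add_le']
    rw [hset, hgumbel, ← gumbelCDF_one_sub_log (hP b), gumbelCDF, one_mul]
  have hle : ∀ a, μ {ω | astar ω = a} ≤ ENNReal.ofReal (P a) := fun a =>
    calc μ {ω | astar ω = a} ≤ μ {ω | ∀ b, G b ω ≤ G a ω} :=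
          measure_mono fun ω (h : astar ω = a) => h ▸ hastar ω
      _ = ENNReal.ofReal (P a) := by
          rw [hGindep.measure_forall_le_eq_div_sum hGmeas hP hGcdf, hPsum, div_one]
  exact toReal_measure_fiber_eq_of_le (fun a => (hP a).le) hPsum hle

/-- Gumbel-max trick: if `E a` are i.i.d. standard Gumbel variables and `astar` is the
argmax of `log P a + E a`, then `astar` is distributed according to `P`:
`P(astar = a) = P a` for every `a`. -/
theorem gumbel_max_trick
    {Ω : Type*} [MeasurableSpace Ω] (μ : Measure Ω) [IsProbabilityMeasure μ]
    {S : Type*} [Fintype S] [Nonempty S]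
    (P : S → ℝ) (hP : ∀ a, 0 < P a) (hPsum : ∑ a, P a = 1)
    (E : S → Ω → ℝ) (hEmeas : ∀ a, Measurable (E a))
    (hindep : ProbabilityTheory.iIndepFun E μ)
    (hgumbel : ∀ a, ∀ g : ℝ,
      μ {ω | E a ω ≤ g} = ENNReal.ofReal (Real.exp (-Real.exp (-g))))
    (astar : Ω → S)
    (hastar : ∀ ω, ∀ a : S,
      Real.log (P a) + E a ω ≤ Real.log (P (astar ω)) + E (astar ω) ω) :
    ∀ a : S, (μ {ω | astar ω = a}).toReal = P a :=
  gumbel_max_trick_general μ P hP hPsum E hEmeas hindep hgumbel astar hastar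
end
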